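/- Let $f : \mathbb{R}^d \to \mathbb{R}$ be twice continuously differentiable with $M$-Lipschitz Hessian, i.e., $\|\nabla^2 f(x) - \nabla^2 f(y)\| \leq M \|x - y\|$. Fix $x \in \mathbb{R}^d$, $c > 0$, and let $z$ be a random vector with $\mathbb{E}[z z^\top] = I_d$ and $s_1 = \mathbb{E}[\|z\|^4] < \infty$. Define the twicing estimator $g = \frac{4 f(x + (c/2) z) - 4 f(x)}{c} z - \frac{f(x + c z) - f(x)}{c} z$. Then the bias satisfies $\|\mathbb{E}[g] - \nabla f(x)\| \leq \frac{c^2}{4} M s_1$. -/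

import Mathlib

/-!
Along the segment `t ↦ x + t • v`, the Lipschitz bound on the Hessian gives Taylor's formula with
remainder `|f (x + v) - f x - ⟪∇f x, v⟫ - ½ ⟪H v, v⟫| ≤ M ‖v‖³ / 6`. Taking `v = (c/2) z` and
`v = c z`, the combination `4 · (step c/2) - (step c)` of the two difference quotients cancels the
Hessian terms, so `g = ⟪∇f x, z⟫ • z + r` with
`‖r‖ ≤ (4 (1/2)³ + 1) / 6 · c² M ‖z‖⁴ = c² M ‖z‖⁴ / 4`. Since `E[z zᵀ] = I`, the first term
has mean `∇f x`; the remainder's mean is bounded by `E ‖r‖`.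
-/

open MeasureTheory Set RealInnerProductSpace InnerProductSpace Gradient

section NormedSpace

variable {E F : Type*} [NormedAddCommGroup E] [NormedSpace ℝ E] [NormedAddCommGroup F]
  [NormedSpace ℝ F]

theorem norm_sub_le_of_norm_deriv_le_mul_pow {φ φ' : ℝ → E} {C : ℝ} (n : ℕ)
    (hφ : ∀ t, HasDerivAt φ (φ' t) t) (bound : ∀ t ∈ Ico (0 : ℝ) 1, ‖φ' t‖ ≤ C * t ^ n) :
    ‖φ 1 - φ 0‖ ≤ C / (n + 1) := by
  have hB (t : ℝ) : HasDerivAt (fun s => C * s ^ (n + 1) / (n + 1)) (C * t ^ n) t := by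
    refine (((hasDerivAt_pow (n + 1) t).const_mul C).div_const ((n : ℝ) + 1)).congr_deriv ?_
    rw [Nat.add_sub_cancel]
    push_cast
    field_simp
  have := image_norm_le_of_norm_deriv_right_le_deriv_boundary (f := fun t => φ t - φ 0)
    (fun t _ => ((hφ t).sub_const _).continuousAt.continuousWithinAt)
    (fun t _ => ((hφ t).sub_const _).hasDerivWithinAt) (by simp) hB bound
    (right_mem_Icc.2 zero_le_one)
  simpa using this

theorem Differentiable.hasDerivAt_comp_add_smul {G : E → F} (hG : Differentiable ℝ G)
    (x v : E) (t : ℝ) : HasDerivAt (fun s : ℝ => G (x + s • v)) (fderiv ℝ G (x + t • v) v) t := by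
  have hline : HasDerivAt (fun s : ℝ => x + s • v) v t := by
    simpa using ((hasDerivAt_id t).smul_const v).const_add x
  exact (hG _).hasFDerivAt.comp_hasDerivAt t hline

theorem norm_sub_sub_fderiv_le_of_lipschitz_fderiv {G : E → F} {M : ℝ} {x : E}
    (hG : Differentiable ℝ G) (hlip : ∀ y, ‖fderiv ℝ G y - fderiv ℝ G x‖ ≤ M * ‖y - x‖) (v : E) :
    ‖G (x + v) - G x - fderiv ℝ G x v‖ ≤ M / 2 * ‖v‖ ^ 2 := by
  have hφ (t : ℝ) : HasDerivAt (fun s : ℝ => G (x + s • v) - s • fderiv ℝ G x v)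
      (fderiv ℝ G (x + t • v) v - fderiv ℝ G x v) t :=
    ((hG.hasDerivAt_comp_add_smul x v t).sub ((hasDerivAt_id' t).smul_const _)).congr_deriv
      (by rw [one_smul])
  have bound : ∀ t ∈ Ico (0 : ℝ) 1,
      ‖fderiv ℝ G (x + t • v) v - fderiv ℝ G x v‖ ≤ M * ‖v‖ ^ 2 * t ^ 1 := by
    intro t ht
    calc ‖fderiv ℝ G (x + t • v) v - fderiv ℝ G x v‖
        ≤ ‖fderiv ℝ G (x + t • v) - fderiv ℝ G x‖ * ‖v‖ :=
          (fderiv ℝ G (x + t • v) - fderiv ℝ G x).le_opNorm v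
      _ ≤ M * ‖t • v‖ * ‖v‖ := by
          gcongr
          simpa using hlip (x + t • v)
      _ = M * ‖v‖ ^ 2 * t ^ 1 := by
          rw [norm_smul, Real.norm_of_nonneg ht.1]
          ring
  convert norm_sub_le_of_norm_deriv_le_mul_pow 1 hφ bound using 2
  · simp only [one_smul, zero_smul, add_zero, sub_zero]
    abel
  · ring

noncomputable def twicingEstimator (f : E → ℝ) (x : E) (c : ℝ) (w : E) : E :=
  ((4 * f (x + (c / 2) • w) - 4 * f x) / c) • w - ((f (x + c • w) - f x) / c) • w

theorem continuous_twicingEstimator {f : E → ℝ} (hf : Continuous f) (x : E) (c : ℝ) :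
    Continuous (twicingEstimator f x c) := by
  unfold twicingEstimator
  fun_prop

end NormedSpace

section InnerProductSpace

variable {E : Type*} [NormedAddCommGroup E] [InnerProductSpace ℝ E] [CompleteSpace E]

theorem ContDiff.gradient {f : E → ℝ} {n : WithTop ℕ∞} (hf : ContDiff ℝ (n + 1) f) :
    ContDiff ℝ n (∇ f) :=
  (toDual ℝ E).symm.contDiff.comp (hf.fderiv_right le_rfl)

theorem abs_sub_sub_inner_gradient_sub_half_le {f : E → ℝ} {M : ℝ} {x : E}
    (hf : Differentiable ℝ f) (hgrad : Differentiable ℝ (∇ f))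
    (hlip : ∀ y, ‖fderiv ℝ (∇ f) y - fderiv ℝ (∇ f) x‖ ≤ M * ‖y - x‖) (v : E) :
    |f (x + v) - f x - ⟪∇ f x, v⟫ - 1 / 2 * ⟪fderiv ℝ (∇ f) x v, v⟫| ≤ M / 6 * ‖v‖ ^ 3 := by
  set H := fderiv ℝ (∇ f) x
  have hφ : ∀ t : ℝ, HasDerivAt (fun s : ℝ => f (x + s • v) - s * ⟪∇ f x, v⟫ - s ^ 2 / 2 * ⟪H v, v⟫)
      ⟪∇ f (x + t • v) - ∇ f x - H (t • v), v⟫ t := by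
    intro t
    have hfline := hf.hasDerivAt_comp_add_smul x v t
    rw [← toDual_gradient, InnerProductSpace.toDual_apply_apply] at hfline
    refine ((hfline.sub ((hasDerivAt_id' t).mul_const _)).sub
      (((hasDerivAt_pow 2 t).div_const 2).mul_const _)).congr_deriv ?_
    rw [map_smul, inner_sub_left, inner_sub_left, real_inner_smul_left]
    ring
  have bound : ∀ t ∈ Ico (0 : ℝ) 1,
      ‖⟪∇ f (x + t • v) - ∇ f x - H (t • v), v⟫‖ ≤ M / 2 * ‖v‖ ^ 3 * t ^ 2 := by
    intro t ht
    calc ‖⟪∇ f (x + t • v) - ∇ f x - H (t • v), v⟫‖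
        ≤ ‖∇ f (x + t • v) - ∇ f x - H (t • v)‖ * ‖v‖ := norm_inner_le_norm _ _
      _ ≤ M / 2 * ‖t • v‖ ^ 2 * ‖v‖ := by
          gcongr
          exact norm_sub_sub_fderiv_le_of_lipschitz_fderiv hgrad hlip _
      _ = M / 2 * ‖v‖ ^ 3 * t ^ 2 := by
          rw [norm_smul, Real.norm_of_nonneg ht.1]
          ring
  have := norm_sub_le_of_norm_deriv_le_mul_pow 2 hφ bound
  rw [Real.norm_eq_abs] at this
  convert this using 2
  · simp only [one_smul, zero_smul, add_zero, one_mul, zero_mul, sub_zero, one_pow,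
      zero_pow two_ne_zero, zero_div]
    ring
  · ring

theorem norm_twicingEstimator_sub_le {f : E → ℝ} {M c : ℝ} {x : E}
    (hf : Differentiable ℝ f) (hgrad : Differentiable ℝ (∇ f))
    (hlip : ∀ y, ‖fderiv ℝ (∇ f) y - fderiv ℝ (∇ f) x‖ ≤ M * ‖y - x‖) (hc : c ≠ 0) (w : E) :
    ‖twicingEstimator f x c w - ⟪∇ f x, w⟫ • w‖ ≤ c ^ 2 / 4 * M * ‖w‖ ^ 4 := by
  set H := fderiv ℝ (∇ f) x
  set R : E → ℝ := fun v => f (x + v) - f x - ⟪∇ f x, v⟫ - 1 / 2 * ⟪H v, v⟫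
  have hR (a : ℝ) : |R (a • w)| ≤ M / 6 * |a| ^ 3 * ‖w‖ ^ 3 := by
    have := abs_sub_sub_inner_gradient_sub_half_le hf hgrad hlip (a • w)
    rwa [norm_smul, Real.norm_eq_abs, mul_pow, ← mul_assoc] at this
  have hcancel : twicingEstimator f x c w - ⟪∇ f x, w⟫ • w
      = ((4 * R ((c / 2) • w) - R (c • w)) / c) • w := by
    simp only [twicingEstimator, R, ← sub_smul, map_smul, real_inner_smul_left,
      real_inner_smul_right]
    congr 1
    field_simp
    ring
  have hnum : |4 * R ((c / 2) • w) - R (c • w)| ≤ M / 4 * |c| ^ 3 * ‖w‖ ^ 3 :=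
    calc |4 * R ((c / 2) • w) - R (c • w)| ≤ 4 * |R ((c / 2) • w)| + |R (c • w)| := by
          simpa only [abs_mul, abs_of_pos (four_pos : (0 : ℝ) < 4)] using
            abs_sub (4 * R ((c / 2) • w)) (R (c • w))
      _ ≤ 4 * (M / 6 * |c / 2| ^ 3 * ‖w‖ ^ 3) + M / 6 * |c| ^ 3 * ‖w‖ ^ 3 := by
          gcongr
          exacts [hR _, hR _]
      _ = M / 4 * |c| ^ 3 * ‖w‖ ^ 3 := by
          rw [abs_div, abs_two]
          ring
  rw [hcancel, norm_smul, Real.norm_eq_abs, abs_div, div_mul_eq_mul_div,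
    div_le_iff₀ (abs_pos.2 hc)]
  calc |4 * R ((c / 2) • w) - R (c • w)| * ‖w‖ ≤ M / 4 * |c| ^ 3 * ‖w‖ ^ 3 * ‖w‖ := by gcongr
    _ = c ^ 2 / 4 * M * ‖w‖ ^ 4 * |c| := by
        rw [← sq_abs c]
        ring

end InnerProductSpace

section SecondMoment

variable {Ω : Type*} [MeasurableSpace Ω] {μ : Measure Ω}

theorem integrable_inner_smul_self {E : Type*} [NormedAddCommGroup E] [InnerProductSpace ℝ E]
    {z : Ω → E} (hz : AEStronglyMeasurable z μ) (h2 : Integrable (fun ω => ‖z ω‖ ^ 2) μ)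
    (a : E) : Integrable (fun ω => ⟪a, z ω⟫ • z ω) μ := by
  refine (h2.const_mul ‖a‖).mono' ((by fun_prop : Continuous fun w : E => ⟪a, w⟫ • w)
    |>.comp_aestronglyMeasurable hz) (ae_of_all _ fun ω => ?_)
  calc ‖⟪a, z ω⟫ • z ω‖ = |⟪a, z ω⟫| * ‖z ω‖ := by rw [norm_smul, Real.norm_eq_abs]
    _ ≤ ‖a‖ * ‖z ω‖ * ‖z ω‖ := by gcongr; exact abs_real_inner_le_norm _ _
    _ = ‖a‖ * ‖z ω‖ ^ 2 := by ring

variable {ι : Type*} [Fintype ι]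

theorem integrable_apply_mul_apply {z : Ω → EuclideanSpace ℝ ι} (hz : AEStronglyMeasurable z μ)
    (h2 : Integrable (fun ω => ‖z ω‖ ^ 2) μ) (i j : ι) :
    Integrable (fun ω => z ω i * z ω j) μ := by
  have hcoord (k : ι) : AEStronglyMeasurable (fun ω => z ω k) μ :=
    (EuclideanSpace.proj k).continuous.comp_aestronglyMeasurable hz
  refine h2.mono' ((hcoord i).mul (hcoord j)) (ae_of_all _ fun ω => ?_)
  rw [norm_mul, sq]
  exact mul_le_mul (PiLp.norm_apply_le _ i) (PiLp.norm_apply_le _ j) (norm_nonneg _)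
    (norm_nonneg _)

theorem integral_inner_smul_self_eq_of_second_moment [DecidableEq ι] {z : Ω → EuclideanSpace ℝ ι}
    (hz : AEStronglyMeasurable z μ) (h2 : Integrable (fun ω => ‖z ω‖ ^ 2) μ)
    (hsecond : ∀ i j, ∫ ω, z ω i * z ω j ∂μ = if i = j then 1 else 0) (a : EuclideanSpace ℝ ι) :
    ∫ ω, ⟪a, z ω⟫ • z ω ∂μ = a := by
  ext i
  have hcoord (ω : Ω) : (⟪a, z ω⟫ • z ω) i = ∑ j, a j * (z ω j * z ω i) := by
    simp only [PiLp.smul_apply, smul_eq_mul, PiLp.inner_apply, RCLike.inner_apply,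
      conj_trivial, Finset.sum_mul]
    exact Finset.sum_congr rfl fun j _ => by ring
  calc (∫ ω, ⟪a, z ω⟫ • z ω ∂μ) i = ∫ ω, (⟪a, z ω⟫ • z ω) i ∂μ :=
        ((EuclideanSpace.proj i).integral_comp_comm (integrable_inner_smul_self hz h2 a)).symm
    _ = ∑ j, a j * ∫ ω, z ω j * z ω i ∂μ := by
        simp only [hcoord]
        rw [integral_finsetSum _ fun j _ => (integrable_apply_mul_apply hz h2 j i).const_mul _]
        simp only [integral_const_mul]
    _ = a i := by simp [hsecond]

end SecondMoment

theorem stmt_9_general {d : ℕ} {Ω : Type*} [MeasurableSpace Ω] (μ : Measure Ω)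
    [IsProbabilityMeasure μ]
    (f : EuclideanSpace ℝ (Fin d) → ℝ) (M : ℝ)
    (hf : ContDiff ℝ 2 f)
    (hlip : ∀ x y : EuclideanSpace ℝ (Fin d),
      ‖fderiv ℝ (gradient f) x - fderiv ℝ (gradient f) y‖ ≤ M * ‖x - y‖)
    (x : EuclideanSpace ℝ (Fin d)) (c : ℝ) (hc : 0 < c)
    (z : Ω → EuclideanSpace ℝ (Fin d)) (hzmeas : Measurable z)
    (hsecond : ∀ i j : Fin d, ∫ ω, z ω i * z ω j ∂μ = if i = j then 1 else 0)
    (hs1 : Integrable (fun ω => ‖z ω‖ ^ 4) μ)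
    (g : Ω → EuclideanSpace ℝ (Fin d))
    (hg : ∀ ω, g ω = ((4 * f (x + (c / 2) • z ω) - 4 * f x) / c) • z ω -
      ((f (x + c • z ω) - f x) / c) • z ω) :
    ‖(∫ ω, g ω ∂μ) - gradient f x‖ ≤ c ^ 2 / 4 * M * ∫ ω, ‖z ω‖ ^ 4 ∂μ := by
  have hgrad : Differentiable ℝ (∇ f) := (hf.gradient (n := 1)).differentiable one_ne_zero
  have hrem (ω : Ω) : ‖g ω - ⟪∇ f x, z ω⟫ • z ω‖ ≤ c ^ 2 / 4 * M * ‖z ω‖ ^ 4 := by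
    rw [hg ω]
    exact norm_twicingEstimator_sub_le (hf.differentiable two_ne_zero) hgrad (hlip · x) hc.ne' _
  have hz : AEStronglyMeasurable z μ := hzmeas.aestronglyMeasurable
  have h2 := integrable_norm_pow_of_le hz (by norm_num : 2 ≤ 4) hs1
  have hmain := integrable_inner_smul_self hz h2 (∇ f x)
  have hg_meas : AEStronglyMeasurable g μ := by
    rw [show g = twicingEstimator f x c ∘ z from funext hg]
    exact (continuous_twicingEstimator hf.continuous x c).comp_aestronglyMeasurable hz
  have hrem_int : Integrable (fun ω => g ω - ⟪∇ f x, z ω⟫ • z ω) μ :=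
    (hs1.const_mul _).mono' (hg_meas.sub hmain.1) (ae_of_all _ hrem)
  have hg_int : Integrable g μ :=
    (hrem_int.add hmain).congr (ae_of_all _ fun ω => sub_add_cancel _ _)
  calc ‖(∫ ω, g ω ∂μ) - ∇ f x‖ = ‖∫ ω, g ω - ⟪∇ f x, z ω⟫ • z ω ∂μ‖ := by
        rw [integral_sub hg_int hmain, integral_inner_smul_self_eq_of_second_moment hz h2 hsecond]
    _ ≤ ∫ ω, c ^ 2 / 4 * M * ‖z ω‖ ^ 4 ∂μ :=
        norm_integral_le_of_norm_le (hs1.const_mul _) (ae_of_all _ hrem)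
    _ = c ^ 2 / 4 * M * ∫ ω, ‖z ω‖ ^ 4 ∂μ := integral_const_mul _ _

theorem stmt_9 {d : ℕ} {Ω : Type*} [MeasurableSpace Ω] (μ : Measure Ω)
    [IsProbabilityMeasure μ]
    (f : EuclideanSpace ℝ (Fin d) → ℝ) (M : ℝ) (hM : 0 ≤ M)
    (hf : ContDiff ℝ 2 f)
    (hlip : ∀ x y : EuclideanSpace ℝ (Fin d),
      ‖fderiv ℝ (gradient f) x - fderiv ℝ (gradient f) y‖ ≤ M * ‖x - y‖)
    (x : EuclideanSpace ℝ (Fin d)) (c : ℝ) (hc : 0 < c)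
    (z : Ω → EuclideanSpace ℝ (Fin d)) (hzmeas : Measurable z)
    (hsecond : ∀ i j : Fin d, ∫ ω, z ω i * z ω j ∂μ = if i = j then 1 else 0)
    (hs1 : Integrable (fun ω => ‖z ω‖ ^ 4) μ)
    (g : Ω → EuclideanSpace ℝ (Fin d))
    (hg : ∀ ω, g ω = ((4 * f (x + (c / 2) • z ω) - 4 * f x) / c) • z ω -
      ((f (x + c • z ω) - f x) / c) • z ω) :
    ‖(∫ ω, g ω ∂μ) - gradient f x‖ ≤ c ^ 2 / 4 * M * ∫ ω, ‖z ω‖ ^ 4 ∂μ :=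
  stmt_9_general μ f M hf hlip x c hc z hzmeas hsecond hs1 g hg
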